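/- For any vectors c, d ∈ ℝ³, with E₁₂ = [c]×, E₂₃ = [d]×, E₃₁ = −[c]× − [d]×, one has E₁₂ᵀE₁₂E₂₃ − (1/2)tr(E₁₂ᵀE₁₂)·E₂₃ + E₁₂* E₃₁ᵀ = 0, where * denotes adjugate. -/

import Mathlib

/-! Since `[c]×ᵀ[c]× = |c|² I − c cᵀ` and `adj [c]× = c cᵀ`, the first two terms reduce to
`−c cᵀ [d]×` and the last to `c cᵀ ([c]× + [d]×)`. What remains is `c cᵀ [c]×`, which vanishes
because `cᵀ [c]× = −(c × c)ᵀ = 0`. -/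

open Matrix

/-- The cross-product matrix of a vector `a ∈ ℝ³`. -/
def skew (a : Fin 3 → ℝ) : Matrix (Fin 3) (Fin 3) ℝ :=
  !![0, -a 2, a 1; a 2, 0, -a 0; -a 1, a 0, 0]

lemma skew_add (a b : Fin 3 → ℝ) : skew (a + b) = skew a + skew b := by
  ext i j; fin_cases i <;> fin_cases j <;> simp [skew] <;> ring

lemma skew_transpose (a : Fin 3 → ℝ) : (skew a)ᵀ = -skew a := by
  ext i j; fin_cases i <;> fin_cases j <;> simp [skew]

lemma skew_transpose_mul_self (a : Fin 3 → ℝ) :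
    (skew a)ᵀ * skew a = (a ⬝ᵥ a) • (1 : Matrix (Fin 3) (Fin 3) ℝ) - vecMulVec a a := by
  ext i j; fin_cases i <;> fin_cases j <;>
    simp [skew, mul_apply, Fin.sum_univ_three, dotProduct, vecMulVec_apply] <;> ring

lemma trace_skew_transpose_mul_self (a : Fin 3 → ℝ) :
    trace ((skew a)ᵀ * skew a) = 2 * (a ⬝ᵥ a) := by
  rw [skew_transpose_mul_self, trace_sub, trace_smul, trace_one, trace_vecMulVec, Fintype.card_fin]
  simp only [smul_eq_mul, Nat.cast_ofNat]
  ring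

lemma adjugate_skew (a : Fin 3 → ℝ) : (skew a).adjugate = vecMulVec a a := by
  ext i j; fin_cases i <;> fin_cases j <;>
    simp [skew, adjugate_fin_three_of, vecMulVec_apply] <;> ring

lemma vecMulVec_self_mul_skew (a : Fin 3 → ℝ) : vecMulVec a a * skew a = 0 := by
  ext i j; fin_cases i <;> fin_cases j <;>
    simp [skew, mul_apply, Fin.sum_univ_three, vecMulVec_apply] <;> ring

/-- With `E₁₂ = [c]×`, `E₂₃ = [d]×`, `E₃₁ = −[c]× − [d]×`:
`E₁₂ᵀE₁₂E₂₃ − (1/2)tr(E₁₂ᵀE₁₂)·E₂₃ + E₁₂* E₃₁ᵀ = 0`. -/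
theorem skew_cubic_constraint (c d : Fin 3 → ℝ) :
    (skew c)ᵀ * skew c * skew d
      - ((1 : ℝ) / 2 * Matrix.trace ((skew c)ᵀ * skew c)) • skew d
      + (skew c).adjugate * (-skew c - skew d)ᵀ = 0 := by
  have hE₃₁ : (-skew c - skew d)ᵀ = skew c + skew d := by
    rw [← neg_add', transpose_neg, ← skew_add, skew_transpose, neg_neg, skew_add]
  rw [hE₃₁, trace_skew_transpose_mul_self, skew_transpose_mul_self, adjugate_skew, mul_add,
    vecMulVec_self_mul_skew, sub_mul, smul_mul, one_mul]
  module
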